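/- Fix δ > −1. For every i ≥ 1, a(i,i) > 0, where a(i,j) = Σ_{m=1}^∞ ((m+δ)/(2+δ)) (b_1^{(i)} − b_m^{(i)} + b_{m+1}^{(i)})(b_1^{(j)} − b_m^{(j)} + b_{m+1}^{(j)}) p_m − (b_1^{(i)} − ((i+δ)/(2+δ)) Σ_{d=1}^i b_d^{(i)} p_d)(b_1^{(j)} − ((j+δ)/(2+δ)) Σ_{l=1}^j b_l^{(j)} p_l). -/

import Mathlib

/-!
Write `q m = ((m + δ) / (2 + δ)) p_m` and `X m = b₁ − b_m + b_{m+1}`. The `q m` form a probability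
distribution: `q (n + 1)` is the difference of consecutive terms of
`Γ(3 + 2δ) / Γ(2 + δ) · Γ(n + 2 + δ) / Γ(n + 3 + 2δ)`, which starts at `1` and decreases to `0`.
The recursion `(m + δ) b_{m+1} = (m − i) b_m` turns `b₁ − ((i + δ)/(2 + δ)) ∑ b_d p_d` into the mean
`∑ q m X m`, so `a(i,i) = ∑ q m (X m)² − (∑ q m X m)²` is the variance of `X` under `q`. It is
positive because `X i = b₁ − 1` and `X (i + 1) = b₁` both carry positive weight.
-/

open Finset

/-- `bcoef δ k j` is `b_j^{(k)} = (−1)^{k−j} Γ(k+δ)/((k−j)! Γ(j+δ))` for `j ≤ k`,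
with the convention `b_j^{(k)} = 0` for `j > k`. -/
noncomputable def bcoef (δ : ℝ) (k j : ℕ) : ℝ :=
  if j ≤ k then
    (-1 : ℝ) ^ (k - j) * Real.Gamma (k + δ) / ((Nat.factorial (k - j)) * Real.Gamma (j + δ))
  else 0

/-- `pk δ k` is the limiting degree frequency
`p_k = c(δ) Γ(k+δ)/Γ(k+3+2δ)` with `c(δ) = (2+δ)Γ(3+2δ)/Γ(1+δ)`, and `p_0 = 0`. -/
noncomputable def pk (δ : ℝ) (k : ℕ) : ℝ :=
  if k = 0 then 0
  else (2 + δ) * Real.Gamma (3 + 2 * δ) / Real.Gamma (1 + δ)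
    * Real.Gamma (k + δ) / Real.Gamma (k + 3 + 2 * δ)

/-- `acov δ i j` is the limit covariance
`a(i,j) = ∑_{m≥1} ((m+δ)/(2+δ)) (b₁⁽ⁱ⁾ − b_m⁽ⁱ⁾ + b_{m+1}⁽ⁱ⁾)(b₁⁽ʲ⁾ − b_m⁽ʲ⁾ + b_{m+1}⁽ʲ⁾) p_m
  − (b₁⁽ⁱ⁾ − ((i+δ)/(2+δ)) ∑_{d=1}^i b_d⁽ⁱ⁾ p_d)(b₁⁽ʲ⁾ − ((j+δ)/(2+δ)) ∑_{l=1}^j b_l⁽ʲ⁾ p_l)`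
(the `m = 0` term of the series vanishes since `p_0 = 0`). -/
noncomputable def acov (δ : ℝ) (i j : ℕ) : ℝ :=
  (∑' m : ℕ, ((m : ℝ) + δ) / (2 + δ)
      * (bcoef δ i 1 - bcoef δ i m + bcoef δ i (m + 1))
      * (bcoef δ j 1 - bcoef δ j m + bcoef δ j (m + 1)) * pk δ m)
    - (bcoef δ i 1 - ((i : ℝ) + δ) / (2 + δ) * ∑ d ∈ Finset.Icc 1 i, bcoef δ i d * pk δ d)
      * (bcoef δ j 1 - ((j : ℝ) + δ) / (2 + δ) * ∑ l ∈ Finset.Icc 1 j, bcoef δ j l * pk δ l)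

open Filter Topology

theorem tendsto_zero_of_succ_eq_one_sub_div_mul {F : ℕ → ℝ} {c b : ℝ}
    (hc : 0 < c) (hb : 0 < b) (hF : ∀ n, 0 ≤ F n) (hrec : ∀ n : ℕ, F (n + 1) = (1 - c / (n + b)) * F n) :
    Tendsto F atTop (𝓝 0) := by
  have hbound : ∀ N, F N ≤ F 0 * Real.exp (-(c * ∑ n ∈ range N, 1 / ((n : ℝ) + b))) := by
    intro N
    induction N with
    | zero => simp
    | succ N ih =>
      calc F (N + 1) = (1 - c / (N + b)) * F N := hrec N
        _ ≤ Real.exp (-(c / (N + b))) * F N := by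
          gcongr
          · exact hF N
          · linarith [Real.add_one_le_exp (-(c / (N + b)))]
        _ ≤ Real.exp (-(c / (N + b)))
            * (F 0 * Real.exp (-(c * ∑ n ∈ range N, 1 / ((n : ℝ) + b)))) := by
          gcongr
        _ = F 0 * Real.exp (-(c * ∑ n ∈ range (N + 1), 1 / ((n : ℝ) + b))) := by
          rw [sum_range_succ, mul_add, neg_add, Real.exp_add]
          ring_nf
  -- `n + b ≤ (1 + b) (n + 1)` compares the series with the harmonic series
  have hharm : Tendsto (fun N => c * ∑ n ∈ range N, 1 / ((n : ℝ) + b)) atTop atTop := by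
    refine tendsto_atTop_mono (fun N => ?_) (Real.tendsto_sum_range_one_div_nat_succ_atTop
      |>.const_mul_atTop (by positivity : 0 < c / (1 + b)))
    rw [mul_sum, mul_sum]
    refine sum_le_sum fun n _ => ?_
    have hn : (0 : ℝ) ≤ n := n.cast_nonneg
    rw [mul_one_div, mul_one_div, div_div,
      div_le_div_iff_of_pos_left hc (by positivity) (by positivity)]
    nlinarith
  refine squeeze_zero hF hbound ?_
  simpa using (Real.tendsto_exp_neg_atTop_nhds_zero.comp hharm).const_mul (F 0)

theorem Real.Gamma_natCast_succ_add {a : ℝ} (n : ℕ) (h : (n : ℝ) + a ≠ 0) :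
    Real.Gamma ((n + 1 : ℕ) + a) = ((n : ℝ) + a) * Real.Gamma (n + a) := by
  rw [Nat.cast_succ, add_right_comm, Real.Gamma_add_one h]

theorem tendsto_Gamma_div_Gamma_atTop_zero {a b : ℝ} (ha : 0 < a) (hab : a < b) :
    Tendsto (fun n : ℕ => Real.Gamma (n + a) / Real.Gamma (n + b)) atTop (𝓝 0) := by
  have hpos : ∀ {x : ℝ}, 0 < x → ∀ n : ℕ, 0 < (n : ℝ) + x := fun hx n => by positivity
  refine tendsto_zero_of_succ_eq_one_sub_div_mul (sub_pos.2 hab) (ha.trans hab)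
    (fun n => (div_pos (Real.Gamma_pos_of_pos (hpos ha n))
      (Real.Gamma_pos_of_pos (hpos (ha.trans hab) n))).le) fun n => ?_
  have hb := hpos (ha.trans hab) n
  rw [Real.Gamma_natCast_succ_add n (hpos ha n).ne', Real.Gamma_natCast_succ_add n hb.ne']
  have := (Real.Gamma_pos_of_pos hb).ne'
  field_simp
  ring

theorem hasSum_sub_succ_of_antitone {g : ℕ → ℝ} (hg : Antitone g)
    (hlim : Tendsto g atTop (𝓝 0)) :
    HasSum (fun n => g n - g (n + 1)) (g 0) := by
  rw [hasSum_iff_tendsto_nat_of_nonneg (fun n => sub_nonneg.2 (hg n.le_succ))]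
  simp_rw [sum_range_sub']
  simpa using tendsto_const_nhds.sub hlim

theorem HasSum.mul_of_eq_off_finset {ι : Type*} {q f : ι → ℝ} {Q c : ℝ} (hq : HasSum q Q)
    (s : Finset ι) (hf : ∀ m ∉ s, f m = c) :
    HasSum (fun m => q m * f m) (c * Q + ∑ m ∈ s, q m * (f m - c)) := by
  have hfin : HasSum (fun m => q m * (f m - c)) (∑ m ∈ s, q m * (f m - c)) :=
    hasSum_sum_of_ne_finset_zero fun m hm => by rw [hf m hm, sub_self, mul_zero]
  exact ((hq.mul_left c).add hfin).congr_fun fun m => by ring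

theorem HasSum.mul_sub_sq {ι : Type*} {q X : ι → ℝ} {μ s : ℝ} (hq : HasSum q 1)
    (hμ : HasSum (fun m => q m * X m) μ) (hs : HasSum (fun m => q m * X m ^ 2) s) :
    HasSum (fun m => q m * (X m - μ) ^ 2) (s - μ ^ 2) := by
  have h := (hs.sub (hμ.mul_left (2 * μ))).add (hq.mul_left (μ ^ 2))
  rw [show s - 2 * μ * μ + μ ^ 2 * 1 = s - μ ^ 2 by ring] at h
  exact h.congr_fun fun m => by ring

theorem sq_lt_of_hasSum_of_apply_ne {ι : Type*} {q X : ι → ℝ} {μ s : ℝ} (hq : HasSum q 1)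
    (hμ : HasSum (fun m => q m * X m) μ) (hs : HasSum (fun m => q m * X m ^ 2) s)
    (hq₀ : ∀ m, 0 ≤ q m) {a b : ι} (ha : 0 < q a) (hb : 0 < q b) (hab : X a ≠ X b) :
    μ ^ 2 < s := by
  obtain ⟨c, hc, hXc⟩ : ∃ c, 0 < q c ∧ X c ≠ μ := by
    by_cases hXa : X a = μ
    · exact ⟨b, hb, fun hXb => hab (hXa.trans hXb.symm)⟩
    · exact ⟨a, ha, hXa⟩
  have hterm : 0 < q c * (X c - μ) ^ 2 := mul_pos hc (sq_pos_iff.2 (sub_ne_zero.2 hXc))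
  linarith [le_hasSum (hq.mul_sub_sq hμ hs) c fun m _ => mul_nonneg (hq₀ m) (sq_nonneg _)]

noncomputable def attachProb (δ : ℝ) (m : ℕ) : ℝ := ((m : ℝ) + δ) / (2 + δ) * pk δ m

/-- `attachTail δ n = ∑_{m > n} attachProb δ m`. -/
noncomputable def attachTail (δ : ℝ) (n : ℕ) : ℝ :=
  Real.Gamma (3 + 2 * δ) / Real.Gamma (2 + δ)
    * (Real.Gamma (n + (2 + δ)) / Real.Gamma (n + (3 + 2 * δ)))

noncomputable def bJump (δ : ℝ) (i m : ℕ) : ℝ :=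
  bcoef δ i 1 - bcoef δ i m + bcoef δ i (m + 1)

section

variable {δ : ℝ}

theorem attachProb_zero (δ : ℝ) : attachProb δ 0 = 0 := by simp [attachProb, pk]

theorem pk_pos (hδ : -1 < δ) {k : ℕ} (hk : 1 ≤ k) : 0 < pk δ k := by
  have hk' : (1 : ℝ) ≤ k := by exact_mod_cast hk
  rw [pk, if_neg (by omega)]
  have := Real.Gamma_pos_of_pos (show 0 < 3 + 2 * δ by linarith)
  have := Real.Gamma_pos_of_pos (show 0 < 1 + δ by linarith)
  have := Real.Gamma_pos_of_pos (show 0 < (k : ℝ) + δ by linarith)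
  have := Real.Gamma_pos_of_pos (show 0 < (k : ℝ) + 3 + 2 * δ by linarith)
  have : 0 < 2 + δ := by linarith
  positivity

theorem attachProb_pos (hδ : -1 < δ) {m : ℕ} (hm : 1 ≤ m) : 0 < attachProb δ m := by
  have hm' : (1 : ℝ) ≤ m := by exact_mod_cast hm
  exact mul_pos (div_pos (by linarith) (by linarith)) (pk_pos hδ hm)

theorem attachProb_nonneg (hδ : -1 < δ) (m : ℕ) : 0 ≤ attachProb δ m := by
  rcases m.eq_zero_or_pos with rfl | hm
  · rw [attachProb_zero]
  · exact (attachProb_pos hδ hm).le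

theorem attachProb_succ_eq_sub (hδ : -1 < δ) (n : ℕ) :
    attachProb δ (n + 1) = attachTail δ n - attachTail δ (n + 1) := by
  have hGamma : ∀ x y : ℝ, x = y + 1 → y ≠ 0 → Real.Gamma x = y * Real.Gamma y := by
    rintro x y rfl hy
    exact Real.Gamma_add_one hy
  have h1 := hGamma (2 + δ) (1 + δ) (by ring) (by linarith)
  have h2 := hGamma (n + (2 + δ)) ((n + 1 : ℕ) + δ) (by push_cast; ring)
    (by push_cast; linarith)
  have h3 := hGamma ((n + 1 : ℕ) + 3 + 2 * δ) (n + (3 + 2 * δ)) (by push_cast; ring)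
    (by linarith)
  have h4 := Real.Gamma_natCast_succ_add (a := 2 + δ) n (by linarith)
  have h5 := Real.Gamma_natCast_succ_add (a := 3 + 2 * δ) n (by linarith)
  have := (Real.Gamma_pos_of_pos (show 0 < 1 + δ by linarith)).ne'
  have := (Real.Gamma_pos_of_pos (show 0 < (n : ℝ) + (3 + 2 * δ) by linarith)).ne'
  have : 2 + δ ≠ 0 := by linarith
  have : 1 + δ ≠ 0 := by linarith
  have : (n : ℝ) + (3 + 2 * δ) ≠ 0 := by linarith
  rw [attachProb, pk, if_neg n.succ_ne_zero, attachTail, attachTail, h4, h5, h2, h3, h1]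
  push_cast
  rw [← mul_sub, div_sub_div _ _ (by assumption) (by positivity)]
  field_simp
  ring

theorem hasSum_attachProb (hδ : -1 < δ) : HasSum (attachProb δ) 1 := by
  have hanti : Antitone (attachTail δ) := antitone_nat_of_succ_le fun n => by
    linarith [attachProb_succ_eq_sub hδ n, attachProb_nonneg hδ (n + 1)]
  have hlim : Tendsto (attachTail δ) atTop (𝓝 0) := by
    have := (tendsto_Gamma_div_Gamma_atTop_zero (by linarith : 0 < 2 + δ)
      (by linarith : 2 + δ < 3 + 2 * δ)).const_mul (Real.Gamma (3 + 2 * δ) / Real.Gamma (2 + δ))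
    rwa [mul_zero] at this
  have htail0 : attachTail δ 0 = 1 := by
    have := (Real.Gamma_pos_of_pos (show 0 < 2 + δ by linarith)).ne'
    have := (Real.Gamma_pos_of_pos (show 0 < 3 + 2 * δ by linarith)).ne'
    simp only [attachTail, Nat.cast_zero, zero_add]
    field_simp
  have hshift : HasSum (fun n => attachProb δ (n + 1)) 1 := by
    simpa only [attachProb_succ_eq_sub hδ, htail0] using hasSum_sub_succ_of_antitone hanti hlim
  simpa [attachProb_zero] using hshift.zero_add

theorem bcoef_of_lt {k j : ℕ} (h : k < j) : bcoef δ k j = 0 := by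
  rw [bcoef, if_neg h.not_ge]

theorem bcoef_self {k : ℕ} (h : Real.Gamma (k + δ) ≠ 0) : bcoef δ k k = 1 := by
  simp [bcoef, h]

theorem natCast_add_mul_bcoef_succ (i : ℕ) {m : ℕ} (hm : 0 < (m : ℝ) + δ) :
    ((m : ℝ) + δ) * bcoef δ i (m + 1) = ((m : ℝ) - i) * bcoef δ i m := by
  rcases lt_trichotomy m i with hmi | rfl | hmi
  · obtain ⟨r, rfl⟩ : ∃ r, i = m + 1 + r := ⟨i - m - 1, by omega⟩
    have hG := Real.Gamma_natCast_succ_add m hm.ne'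
    have := (Real.Gamma_pos_of_pos hm).ne'
    rw [bcoef, bcoef, if_pos (by omega), if_pos (by omega), show m + 1 + r - (m + 1) = r by omega,
      show m + 1 + r - m = r + 1 by omega, hG, Nat.factorial_succ]
    push_cast
    field_simp
    ring
  · rw [bcoef_of_lt m.lt_succ_self, sub_self, mul_zero, zero_mul]
  · rw [bcoef_of_lt hmi, bcoef_of_lt (hmi.trans m.lt_succ_self), mul_zero, mul_zero]

theorem bJump_of_lt {i m : ℕ} (h : i < m) : bJump δ i m = bcoef δ i 1 := by
  rw [bJump, bcoef_of_lt h, bcoef_of_lt (h.trans m.lt_succ_self), sub_zero, add_zero]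

theorem bJump_self (hδ : -1 < δ) {i : ℕ} (hi : 1 ≤ i) : bJump δ i i = bcoef δ i 1 - 1 := by
  have hi' : (1 : ℝ) ≤ i := by exact_mod_cast hi
  rw [bJump, bcoef_self (Real.Gamma_pos_of_pos (by linarith)).ne', bcoef_of_lt i.lt_succ_self,
    add_zero]

theorem attachProb_mul_bJump_sub (hδ : -1 < δ) (i m : ℕ) :
    attachProb δ m * (bJump δ i m - bcoef δ i 1)
      = -(((i : ℝ) + δ) / (2 + δ)) * (bcoef δ i m * pk δ m) := by
  rcases m.eq_zero_or_pos with rfl | hm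
  · simp [attachProb_zero, pk]
  have hm' : (1 : ℝ) ≤ m := by exact_mod_cast hm
  have key := natCast_add_mul_bcoef_succ (δ := δ) i (m := m) (by linarith)
  have : 2 + δ ≠ 0 := by linarith
  rw [attachProb, bJump]
  field_simp
  linear_combination pk δ m * key

theorem sum_attachProb_mul_bJump_sub (hδ : -1 < δ) (i : ℕ) :
    ∑ m ∈ range (i + 1), attachProb δ m * (bJump δ i m - bcoef δ i 1)
      = -(((i : ℝ) + δ) / (2 + δ)) * ∑ d ∈ Icc 1 i, bcoef δ i d * pk δ d := by
  rw [Nat.range_succ_eq_Icc_zero, ← insert_Icc_add_one_left_eq_Icc i.zero_le,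
    sum_insert (by simp), attachProb_zero, zero_mul, zero_add, mul_sum]
  exact sum_congr rfl fun m _ => attachProb_mul_bJump_sub hδ i m

end

theorem acov_self_eq (δ : ℝ) (i : ℕ) :
    acov δ i i = ∑' m, attachProb δ m * bJump δ i m ^ 2
      - (bcoef δ i 1 - ((i : ℝ) + δ) / (2 + δ) * ∑ d ∈ Icc 1 i, bcoef δ i d * pk δ d) ^ 2 := by
  rw [acov, sq _]
  congr 1
  exact tsum_congr fun m => by rw [attachProb, bJump]; ring

/-- For every `i ≥ 1`, the limiting variance `a(i,i)` is strictly positive. -/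
theorem acov_diag_pos (δ : ℝ) (hδ : -1 < δ) (i : ℕ) (hi : 1 ≤ i) :
    0 < acov δ i i := by
  have hq := hasSum_attachProb hδ
  have htail : ∀ m ∉ range (i + 1), bJump δ i m = bcoef δ i 1 := fun m hm =>
    bJump_of_lt (by simpa [Nat.lt_succ_iff] using hm)
  have hmean : HasSum (fun m => attachProb δ m * bJump δ i m)
      (bcoef δ i 1 - ((i : ℝ) + δ) / (2 + δ) * ∑ d ∈ Icc 1 i, bcoef δ i d * pk δ d) := by
    have h := hq.mul_of_eq_off_finset _ htail
    rwa [sum_attachProb_mul_bJump_sub hδ, mul_one, neg_mul, ← sub_eq_add_neg] at h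
  have hsq := hq.mul_of_eq_off_finset (f := fun m => bJump δ i m ^ 2) _ fun m hm => by
    rw [htail m hm]
  rw [acov_self_eq, hsq.tsum_eq, sub_pos]
  refine sq_lt_of_hasSum_of_apply_ne hq hmean hsq (attachProb_nonneg hδ) (attachProb_pos hδ hi)
    (attachProb_pos hδ i.succ_pos) ?_
  rw [bJump_self hδ hi, bJump_of_lt i.lt_succ_self]
  exact (sub_lt_self _ one_pos).ne
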